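/- Let p be an odd prime and let G be a finite non-abelian p-abelian p-group of nilpotence class n such that |γ_n(G)| = p. Then G has a non-inner automorphism of order p that fixes the Frattini subgroup Φ(G) elementwise. -/

import Mathlib

/-!
Since `G` is `p`-abelian, the `p`-power map `π` is a homomorphism, and its image is central. Choose
a maximal subgroup `M` with `π(M) < Z(G)`: one containing `ker π` if `ker π ≠ G`, and any one
otherwise. For `x ∉ M` and `1 ≠ k ∈ Z(M)` with `k ^ p = 1`, the rule `x ^ j m ↦ (x k) ^ j m`
defines an automorphism of order `p` that fixes `M ⊇ Φ(G)`.

If `Z(G) ⊄ M`, take `x` central and `1 ≠ k ∈ γ_n(G) ≤ Z(G) ∩ G'`: no inner automorphism moves `x`.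
If `Z(G) ≤ M`, an inner automorphism of this shape is conjugation by some `g ∈ Z(M)` with
`k = [x⁻¹, g]`. On `Z(M)`, the map `g ↦ [x⁻¹, g]` is a homomorphism with kernel `Z(G)` and the map
`g ↦ g ^ p` has image `π(Z(M)) < Z(G)`. Counting then gives more elements `k` with `k ^ p = 1` than
commutators `[x⁻¹, g]`.
-/

open Subgroup
open scoped commutatorElement

section

def IsPAbelian (p : ℕ) (G : Type*) [Group G] : Prop :=
  ∀ x y : G, (x * y) ^ p = x ^ p * y ^ p

variable {G : Type*} [Group G] {p : ℕ}

lemma Subgroup.card_lt_card_of_lt {H K : Subgroup G} [Finite K] (h : H < K) :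
    Nat.card H < Nat.card K :=
  (card_le_of_le h.le).lt_of_ne fun e => h.ne (eq_of_le_of_card_ge h.le e.ge)

lemma MonoidHom.card_range_lt_card_ker_of_card_range_lt_card_ker {H G₁ G₂ : Type*} [Group H]
    [Finite H] [Group G₁] [Group G₂] (f : H →* G₁) (g : H →* G₂)
    (h : Nat.card g.range < Nat.card f.ker) : Nat.card f.range < Nat.card g.ker := by
  have hf := f.ker.card_mul_index
  have hg := g.ker.card_mul_index
  rw [index_ker] at hf hg
  have : 0 < Nat.card g.ker := Nat.card_pos
  by_contra! hle
  nlinarith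

lemma MulAut.pow_apply_of_apply_eq_mul {α : MulAut G} {c g : G} (hc : α c = c)
    (hg : α g = c * g) (j : ℕ) : (α ^ j) g = c ^ j * g := by
  induction j with
  | zero => simp
  | succ j ih =>
    rw [pow_succ', MulAut.mul_apply, ih, map_mul, map_pow, hc, hg, ← mul_assoc, ← pow_succ]

theorem mem_center_of_isCoatom {M : Subgroup G} (hM : IsCoatom M) {x g : G} (hx : x ∉ M)
    (hgM : g ∈ centralizer M) (hgx : Commute x g) : g ∈ center G := by
  have htop : centralizer {g} = ⊤ := by
    refine hM.2 _ (SetLike.lt_iff_le_and_exists.mpr ⟨fun m hm => ?_, x, ?_, hx⟩)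
    · exact mem_centralizer_singleton_iff.mpr (mem_centralizer_iff.mp hgM m hm)
    · exact mem_centralizer_singleton_iff.mpr hgx.eq
  exact centralizer_eq_top_iff_subset.mp htop rfl

theorem centralizer_le_of_isCoatom {M : Subgroup G} (hM : IsCoatom M) (hZ : center G ≤ M) :
    centralizer M ≤ M := fun g hg =>
  by_contra fun hgM => hgM (hZ (mem_center_of_isCoatom hM hgM hg (Commute.refl g)))

theorem IsPGroup.card_quotient_of_isCoatom [Fact p.Prime] [Finite G] (hpG : IsPGroup p G)
    {M : Subgroup G} [M.Normal] (hM : IsCoatom M) : Nat.card (G ⧸ M) = p := by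
  have : Nontrivial (G ⧸ M) := QuotientGroup.nontrivial_iff.mpr hM.1
  obtain ⟨n, hn0, hn⟩ := (hpG.to_quotient M).nontrivial_iff_card.mp this
  obtain ⟨q, hq⟩ := exists_prime_orderOf_dvd_card' p (hn ▸ dvd_pow_self p hn0.ne')
  obtain ⟨g, rfl⟩ := QuotientGroup.mk'_surjective M q
  have hmk : ∀ m ∈ M, QuotientGroup.mk' M m = 1 := fun m hm => (QuotientGroup.eq_one_iff m).mpr hm
  have hg : g ∉ M := fun hg => (Fact.out : p.Prime).one_lt.ne' <| by
    rwa [hmk g hg, orderOf_one, eq_comm] at hq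
  have htop : (zpowers (QuotientGroup.mk' M g)).comap (QuotientGroup.mk' M) = ⊤ := by
    refine hM.2 _ (SetLike.lt_iff_le_and_exists.mpr ⟨fun m hm => ?_, g, mem_zpowers _, hg⟩)
    rw [mem_comap, hmk m hm]
    exact one_mem _
  have : zpowers (QuotientGroup.mk' M g) = ⊤ := by
    rw [← map_comap_eq_self_of_surjective (QuotientGroup.mk'_surjective M) (zpowers _), htop,
      ← MonoidHom.range_eq_map, MonoidHom.range_eq_top.mpr (QuotientGroup.mk'_surjective M)]
  rw [← card_top, ← this, Nat.card_zpowers, hq]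

namespace IsPAbelian

def powHom (hpab : IsPAbelian p G) : G →* G := MonoidHom.mk' (· ^ p) hpab

theorem pow_mem_center [Fact p.Prime] (hpab : IsPAbelian p G) (hpG : IsPGroup p G) (y : G) :
    y ^ p ∈ center G := by
  have hp := (Fact.out : p.Prime)
  refine mem_center_iff.mpr fun x => ?_
  have hconj : x⁻¹ * y ^ p * x = (x ^ p)⁻¹ * y ^ p * x ^ p := by
    have := conj_pow (a := x⁻¹) (b := y) (i := p)
    rwa [inv_inv, hpab, hpab, inv_pow, eq_comm] at this
  have hxp : x ^ p = x ^ (p - 1) * x := (pow_sub_one_mul hp.ne_zero x).symm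
  have hcomm : Commute (x ^ (p - 1)) (y ^ p) := calc
    x ^ (p - 1) * y ^ p = x ^ p * (x⁻¹ * y ^ p * x) * x⁻¹ := by rw [hxp]; group
    _ = y ^ p * x ^ (p - 1) := by rw [hconj, hxp]; group
  obtain ⟨m, hm⟩ := exists_pow_eq_self_of_coprime
    (hpG.orderOf_coprime ((Nat.coprime_self_sub_right hp.pos).mpr (Nat.coprime_one_right p)) x).symm
  rw [← hm]
  exact (hcomm.pow_left m).eq

theorem range_powHom_le_center [Fact p.Prime] (hpab : IsPAbelian p G) (hpG : IsPGroup p G) :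
    hpab.powHom.range ≤ center G := by
  rintro _ ⟨y, rfl⟩
  exact hpab.pow_mem_center hpG y

theorem exists_isCoatom_map_powHom_lt_center [Fact p.Prime] [Finite G] [Nontrivial G]
    (hpab : IsPAbelian p G) (hpG : IsPGroup p G) :
    ∃ M : Subgroup G, IsCoatom M ∧ M.map hpab.powHom < center G := by
  rcases eq_or_ne hpab.powHom.ker ⊤ with hΩ | hΩ
  · obtain ⟨M, hM, -⟩ := (eq_top_or_exists_le_coatom (⊥ : Subgroup G)).resolve_left bot_ne_top
    refine ⟨M, hM, lt_of_le_of_lt ?_ hpG.bot_lt_center⟩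
    rw [le_bot_iff, Subgroup.map_eq_bot_iff, hΩ]
    exact le_top
  · obtain ⟨M, hM, hΩM⟩ := (eq_top_or_exists_le_coatom hpab.powHom.ker).resolve_left hΩ
    refine ⟨M, hM, lt_of_lt_of_le ?_ (hpab.range_powHom_le_center hpG)⟩
    rw [MonoidHom.range_eq_map]
    refine (map_mono le_top).lt_of_ne fun heq => hM.1 ?_
    have := congrArg (comap hpab.powHom) heq
    rwa [comap_map_eq, comap_map_eq, sup_of_le_left hΩM, top_sup_eq] at this

end IsPAbelian

theorem exists_mulAut_of_cocycle [Finite G] (M : Subgroup G) (w : G → G)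
    (hw : ∀ g h, w (g * h) = w g * (g * w h * g⁻¹)) (hwM : ∀ g, w g ∈ M)
    (hMw : ∀ m ∈ M, w m = 1) : ∃ α : MulAut G, ∀ g, α g = w g * g := by
  let F : G →* G := MonoidHom.mk' (fun g => w g * g) fun g h => by rw [hw]; group
  have hinj : Function.Injective F := by
    refine (injective_iff_map_eq_one F).mpr fun g hg => ?_
    have hgM : g ∈ M := eq_inv_of_mul_eq_one_right hg ▸ inv_mem (hwM g)
    simpa [F, hMw g hgM] using hg
  exact ⟨MulEquiv.ofBijective F (Finite.injective_iff_bijective.mp hinj), fun g => rfl⟩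

/-- Multiplying `x ^ j * m` (`m ∈ M`) on the left by this cocycle gives `(x * k) ^ j * m`. -/
def twistCocycle (x k : G) (j : ℤ) : G := (x * k) ^ j * (x ^ j)⁻¹

section twistCocycle

variable {x k : G}

lemma twistCocycle_add (a b : ℤ) :
    twistCocycle x k (a + b) = twistCocycle x k a * (x ^ a * twistCocycle x k b * (x ^ a)⁻¹) := by
  simp only [twistCocycle, zpow_add]
  group

lemma twistCocycle_mem {M : Subgroup G} [M.Normal] (hk : k ∈ M ⊓ centralizer M) (j : ℤ) :
    twistCocycle x k j ∈ M ⊓ centralizer M := by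
  have hconj (i : ℤ) : x ^ i * twistCocycle x k 1 * (x ^ i)⁻¹ ∈ M ⊓ centralizer M := by
    refine Normal.conj_mem inferInstance _ ?_ _
    simpa [twistCocycle, mul_assoc] using Normal.conj_mem inferInstance k hk x
  induction j using Int.induction_on with
  | zero => simp [twistCocycle]
  | succ i ih =>
    rw [twistCocycle_add]
    exact mul_mem ih (hconj _)
  | pred i ih =>
    have h := twistCocycle_add (x := x) (k := k) (-(i : ℤ) - 1) 1
    rw [sub_add_cancel] at h
    rw [eq_mul_inv_of_mul_eq h.symm]
    exact mul_mem ih (inv_mem (hconj _))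

lemma twistCocycle_mul_eq_one (hpab : IsPAbelian p G) (hkp : k ^ p = 1) (t : ℤ) :
    twistCocycle x k (p * t) = 1 := by
  have : (x * k) ^ p = x ^ p := by rw [hpab, hkp, mul_one]
  simp only [twistCocycle, zpow_mul, zpow_natCast, this, mul_inv_cancel]

lemma twistCocycle_pow_eq_one (hpab : IsPAbelian p G) (hkp : k ^ p = 1) (j : ℤ) :
    twistCocycle x k j ^ p = 1 := by
  have : (x * k) ^ p = x ^ p := by rw [hpab, hkp, mul_one]
  rw [twistCocycle, hpab, inv_pow, ← zpow_natCast, ← zpow_natCast, ← zpow_mul, ← zpow_mul,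
    mul_comm j, zpow_mul, zpow_mul, zpow_natCast, zpow_natCast, this, mul_inv_cancel]

lemma twistCocycle_congr (hpab : IsPAbelian p G) (hkp : k ^ p = 1) {a b : ℤ}
    (hab : a ≡ b [ZMOD p]) : twistCocycle x k a = twistCocycle x k b := by
  obtain ⟨t, ht⟩ := hab.dvd
  rw [show b = a + p * t by omega, twistCocycle_add, twistCocycle_mul_eq_one hpab hkp]
  group

end twistCocycle

lemma conj_eq_conj_of_inv_mul_mem {M : Subgroup G} {c g y : G} (hc : c ∈ centralizer M)
    (hyg : y⁻¹ * g ∈ M) : g * c * g⁻¹ = y * c * y⁻¹ := by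
  have := mem_centralizer_iff.mp hc _ hyg
  calc g * c * g⁻¹ = y * ((y⁻¹ * g) * c) * (y⁻¹ * g)⁻¹ * y⁻¹ := by group
    _ = y * c * y⁻¹ := by rw [this]; group

namespace IsPAbelian

theorem exists_mulAut_fix_apply_eq_mul [Fact p.Prime] [Finite G] (hpab : IsPAbelian p G)
    {M : Subgroup G} [M.Normal] (hMp : Nat.card (G ⧸ M) = p) {x k : G} (hx : x ∉ M)
    (hk : k ∈ M ⊓ centralizer M) (hk1 : k ≠ 1) (hkp : k ^ p = 1) :
    ∃ α : MulAut G, orderOf α = p ∧ (∀ m ∈ M, α m = m) ∧ α x = x * k := by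
  let q := QuotientGroup.mk' M
  have hx1 : q x ≠ 1 := fun h => hx ((QuotientGroup.eq_one_iff x).mp h)
  have hord : orderOf (q x) = p := by
    rw [orderOf_eq_card_of_zpowers_eq_top (zpowers_eq_top_of_prime_card hMp hx1), hMp]
  choose v hv using fun g => mem_zpowers_iff.mp (mem_zpowers_of_prime_card hMp hx1 (g' := q g))
  have hw {a : ℤ} {g : G} (h : q x ^ a = q g) : twistCocycle x k a = twistCocycle x k (v g) :=
    twistCocycle_congr hpab hkp (hord ▸ zpow_eq_zpow_iff_modEq.mp (h.trans (hv g).symm))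
  have hvM (g : G) : (x ^ v g)⁻¹ * g ∈ M := by
    rw [← QuotientGroup.eq_one_iff, ← QuotientGroup.mk'_apply, map_mul, map_inv, map_zpow, hv g,
      inv_mul_cancel]
  have hwM (m : G) (hm : m ∈ M) : twistCocycle x k (v m) = 1 := by
    rw [← hw (a := 0) (by rw [zpow_zero, eq_comm]; exact (QuotientGroup.eq_one_iff m).mpr hm)]
    simp [twistCocycle]
  obtain ⟨α, hα⟩ := exists_mulAut_of_cocycle M (fun g => twistCocycle x k (v g))
    (fun g h => by
      rw [← hw (a := v g + v h) (by rw [zpow_add, hv, hv, map_mul]), twistCocycle_add,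
        conj_eq_conj_of_inv_mul_mem (twistCocycle_mem hk _).2 (hvM g)])
    (fun g => (twistCocycle_mem hk _).1) hwM
  have hαM (m : G) (hm : m ∈ M) : α m = m := by rw [hα, hwM m hm, one_mul]
  have hαx : α x = x * k := by
    rw [hα, ← hw (a := 1) (by rw [zpow_one])]
    simp [twistCocycle]
  have hαp : α ^ p = 1 := MulEquiv.ext fun g => by
    have hc := hαM _ (twistCocycle_mem (x := x) hk (v g)).1
    rw [MulAut.pow_apply_of_apply_eq_mul hc (hα g), twistCocycle_pow_eq_one hpab hkp, one_mul,
      MulAut.one_apply]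
  have hα1 : α ≠ 1 := fun h => hk1 <| mul_left_cancel (a := x) <| by
    rw [← hαx, h, MulAut.one_apply, mul_one]
  exact ⟨α, orderOf_eq_prime hαp hα1, hαM, hαx⟩

end IsPAbelian

def commutatorHom (N : Subgroup G) [N.Normal] (x : G) : ↥(N ⊓ centralizer N) →* G :=
  MonoidHom.mk' (fun v => ⁅x⁻¹, (v : G)⁆) fun a b => by
    have hb : ⁅x⁻¹, (b : G)⁆ ∈ N :=
      mul_mem (Normal.conj_mem inferInstance _ b.2.1 x⁻¹) (inv_mem b.2.1)
    have hab : Commute ⁅x⁻¹, (b : G)⁆ a := mem_centralizer_iff.mp a.2.2 _ hb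
    calc ⁅x⁻¹, ((a * b : ↥(N ⊓ centralizer N)) : G)⁆
        = x⁻¹ * a * x * (⁅x⁻¹, (b : G)⁆ * (a : G)⁻¹) := by
          simp only [commutatorElement_def, coe_mul]
          group
      _ = ⁅x⁻¹, (a : G)⁆ * ⁅x⁻¹, (b : G)⁆ := by
          rw [hab.inv_right.eq]
          simp only [commutatorElement_def]
          group

@[simp]
lemma commutatorHom_apply (N : Subgroup G) [N.Normal] (x : G) (v : ↥(N ⊓ centralizer N)) :
    commutatorHom N x v = ⁅x⁻¹, (v : G)⁆ := rfl

lemma commutator_le_of_card_quotient_eq_prime [Fact p.Prime] {M : Subgroup G} [M.Normal]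
    (hMp : Nat.card (G ⧸ M) = p) : commutator G ≤ M :=
  have := isCyclic_of_prime_card hMp
  Normal.quotient_commutative_iff_commutator_le.mp inferInstance

theorem exists_mem_center_commutator_of_card_lowerCentralSeries [Group.IsNilpotent G]
    [Fact p.Prime] (hG : ¬ IsMulCommutative G)
    (hcard : Nat.card ((⊤ : Subgroup G).lowerCentralSeries (Group.nilpotencyClass G - 1)) = p) :
    ∃ t ∈ center G ⊓ commutator G, t ≠ 1 ∧ t ^ p = 1 := by
  set c := Group.nilpotencyClass G
  set γ := (⊤ : Subgroup G).lowerCentralSeries (c - 1)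
  have hc : 2 ≤ c := by
    by_contra! h
    exact hG (Group.IsNilpotent.nilpotencyClass_le_one_iff.mp (by omega))
  have hZ : γ ≤ center G := by
    have h : (⊤ : Subgroup G).lowerCentralSeries c = ⊥ :=
      Subgroup.lowerCentralSeries_nilpotencyClass
    rwa [← Nat.sub_add_cancel (by omega : 1 ≤ c), Subgroup.lowerCentralSeries_succ,
      commutator_eq_bot_iff_le_centralizer, coe_top, centralizer_univ] at h
  have hG' : γ ≤ commutator G := Subgroup.lowerCentralSeries_antitone ⊤ (by omega : 1 ≤ c - 1)
  obtain ⟨t, ht, ht1⟩ := γ.bot_or_exists_ne_one.resolve_left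
    fun h => (Fact.out : p.Prime).one_lt.ne (by rw [← hcard, h, card_bot])
  refine ⟨t, ⟨hZ ht, hG' ht⟩, ht1, orderOf_dvd_iff_pow_eq_one.mp ?_⟩
  exact hcard ▸ Subgroup.orderOf_dvd_natCard _ ht

namespace IsPAbelian

theorem exists_pow_eq_one_notMem_range_commutatorHom [Finite G] (hpab : IsPAbelian p G)
    {M : Subgroup G} [M.Normal] (hZ : center G ≤ M) (hMπ : M.map hpab.powHom < center G)
    (x : G) : ∃ k ∈ M ⊓ centralizer M, k ^ p = 1 ∧ k ∉ (commutatorHom M x).range := by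
  set Z := M ⊓ centralizer M
  have hZZ : center G ≤ Z := le_inf hZ (center_le_centralizer _)
  have hker : Nat.card (center G) ≤ Nat.card (commutatorHom M x).ker := by
    rw [← Nat.card_congr (subgroupOfEquivOfLe hZZ).toEquiv]
    refine card_le_of_le fun v hv => ?_
    rw [MonoidHom.mem_ker, commutatorHom_apply, commutatorElement_eq_one_iff_mul_comm]
    exact mem_center_iff.mp (mem_subgroupOf.mp hv) x⁻¹
  have hρ : Nat.card (hpab.powHom.domRestrict Z).range < Nat.card (commutatorHom M x).ker := by
    rw [MonoidHom.domRestrict_range]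
    exact (card_lt_card_of_lt ((map_mono inf_le_left).trans_lt hMπ)).trans_le hker
  have hlt := (commutatorHom M x).card_range_lt_card_ker_of_card_range_lt_card_ker
    (hpab.powHom.domRestrict Z) hρ
  obtain ⟨_, ⟨k, hk, rfl⟩, hkr⟩ := SetLike.not_le_iff_exists.mp
    fun hle : (hpab.powHom.domRestrict Z).ker.map Z.subtype ≤ (commutatorHom M x).range =>
      (card_le_of_le hle).not_gt (by rw [card_map_of_injective Z.subtype_injective]; exact hlt)
  exact ⟨k, k.2, hk, hkr⟩

theorem exists_nonInner_of_center_le [Fact p.Prime] [Finite G] (hpab : IsPAbelian p G)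
    {M : Subgroup G} [M.Normal] (hM : IsCoatom M) (hMp : Nat.card (G ⧸ M) = p)
    (hZ : center G ≤ M) (hMπ : M.map hpab.powHom < center G) :
    ∃ α : MulAut G, (¬ ∃ g, α = MulAut.conj g) ∧ orderOf α = p ∧ ∀ m ∈ M, α m = m := by
  obtain ⟨x, -, hx⟩ := SetLike.exists_of_lt (lt_top_iff_ne_top.mpr hM.1)
  obtain ⟨k, hk, hkp, hkr⟩ := hpab.exists_pow_eq_one_notMem_range_commutatorHom hZ hMπ x
  have hk1 : k ≠ 1 := fun h => hkr (h ▸ one_mem _)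
  obtain ⟨α, hαp, hαM, hαx⟩ := hpab.exists_mulAut_fix_apply_eq_mul hMp hx hk hk1 hkp
  refine ⟨α, ?_, hαp, hαM⟩
  rintro ⟨g, rfl⟩
  have hgC : g ∈ centralizer M := mem_centralizer_iff.mpr fun m hm => by
    have := hαM m hm
    rwa [MulAut.conj_apply, mul_inv_eq_iff_eq_mul, eq_comm] at this
  refine hkr ⟨⟨g, centralizer_le_of_isCoatom hM hZ hgC, hgC⟩, ?_⟩
  rw [MulAut.conj_apply] at hαx
  calc ⁅x⁻¹, g⁆ = x⁻¹ * (g * x * g⁻¹) := by rw [commutatorElement_def]; group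
    _ = k := by rw [hαx]; group

theorem exists_nonInner_of_mem_center [Fact p.Prime] [Finite G] (hpab : IsPAbelian p G)
    {M : Subgroup G} [M.Normal] (hMp : Nat.card (G ⧸ M) = p) {x t : G} (hx : x ∈ center G)
    (hxM : x ∉ M) (ht : t ∈ M ⊓ center G) (ht1 : t ≠ 1) (htp : t ^ p = 1) :
    ∃ α : MulAut G, (¬ ∃ g, α = MulAut.conj g) ∧ orderOf α = p ∧ ∀ m ∈ M, α m = m := by
  obtain ⟨α, hαp, hαM, hαx⟩ := hpab.exists_mulAut_fix_apply_eq_mul hMp hxM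
    ⟨ht.1, center_le_centralizer _ ht.2⟩ ht1 htp
  refine ⟨α, ?_, hαp, hαM⟩
  rintro ⟨g, rfl⟩
  rw [MulAut.conj_apply, mem_center_iff.mp hx g, mul_inv_cancel_right] at hαx
  exact ht1 (mul_left_cancel (hαx.symm.trans (mul_one x).symm))

end IsPAbelian

end

theorem stmt_4_general (p : ℕ) (hp : p.Prime) (G : Type*) [Group G] [Finite G]
    [Group.IsNilpotent G] (hpG : IsPGroup p G) (hna : ¬ ∀ a b : G, a * b = b * a)
    (hpab : ∀ x y : G, (x * y) ^ p = x ^ p * y ^ p)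
    (n : ℕ) (hn : Group.nilpotencyClass G = n)
    (hcard : Nat.card ((⊤ : Subgroup G).lowerCentralSeries (n - 1)) = p) :
    ∃ α : MulAut G, (¬ ∃ g : G, α = MulAut.conj g) ∧ orderOf α = p ∧
      ∀ h ∈ frattini G, α h = h := by
  have : Fact p.Prime := ⟨hp⟩
  have hpab : IsPAbelian p G := hpab
  obtain ⟨a, b, hab⟩ : ∃ a b : G, a * b ≠ b * a := by simpa using hna
  have : Nontrivial G := nontrivial_of_ne _ _ hab
  obtain ⟨M, hM, hMπ⟩ := hpab.exists_isCoatom_map_powHom_lt_center hpG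
  have : M.Normal := Group.normalizerCondition_of_isNilpotent.normal_of_coatom M hM
  have hMp := hpG.card_quotient_of_isCoatom hM
  suffices ∃ α : MulAut G, (¬ ∃ g : G, α = MulAut.conj g) ∧ orderOf α = p ∧ ∀ m ∈ M, α m = m by
    obtain ⟨α, hinner, hαp, hαM⟩ := this
    exact ⟨α, hinner, hαp, fun h hh => hαM h (frattini_le_coatom hM hh)⟩
  by_cases hZ : center G ≤ M
  · exact hpab.exists_nonInner_of_center_le hM hMp hZ hMπ
  · obtain ⟨x, hxZ, hxM⟩ := SetLike.not_le_iff_exists.mp hZ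
    obtain ⟨t, ⟨htZ, htG'⟩, ht1, htp⟩ :=
      exists_mem_center_commutator_of_card_lowerCentralSeries (p := p)
        (fun h => hab (h.is_comm.comm a b)) (hn ▸ hcard)
    exact hpab.exists_nonInner_of_mem_center hMp hxZ hxM
      ⟨commutator_le_of_card_quotient_eq_prime hMp htG', htZ⟩ ht1 htp

/-- Let `p` be an odd prime and let `G` be a finite non-abelian `p`-abelian `p`-group
(`(xy)^p = x^p y^p` for all `x y`) of nilpotence class `n` such that `|γ_n(G)| = p`.
Then `G` has a non-inner automorphism of order `p` fixing the Frattini subgroup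
elementwise. (Recall `γ_n(G) = lowerCentralSeries G (n - 1)` in Mathlib's indexing.) -/
theorem stmt_4 (p : ℕ) (hp : p.Prime) (hodd : Odd p) (G : Type*) [Group G] [Finite G]
    [Group.IsNilpotent G] (hpG : IsPGroup p G) (hna : ¬ ∀ a b : G, a * b = b * a)
    (hpab : ∀ x y : G, (x * y) ^ p = x ^ p * y ^ p)
    (n : ℕ) (hn : Group.nilpotencyClass G = n)
    (hcard : Nat.card ((⊤ : Subgroup G).lowerCentralSeries (n - 1)) = p) :
    ∃ α : MulAut G, (¬ ∃ g : G, α = MulAut.conj g) ∧ orderOf α = p ∧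
      ∀ h ∈ frattini G, α h = h :=
  stmt_4_general p hp G hpG hna hpab n hn hcard
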